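/- In the formal power series ring ℚ(q)[[u]], with b_n ∈ ℚ(q) defined by the standard parity-dependent formulas, one has ∑_{i≥1} b_{2i−1}·q^i·u^i = q·u·(1−q·u) / ((1+u)(1−q³u)). -/

import Mathlib

/-!
With `D = 1 - q + q²`, the `i`-th coefficient is
`b_{2i-1} q^i = (q (-1)^(i-1) + (q - 1) q² (q³)^(i-1)) / D`, so the series is `u` times a sum of
two geometric series, in `-u` and in `q³u`. Over the common denominator `(1 + u)(1 - q³u)` the
numerator `q (1 - q³u) + (q - 1) q² (1 + u)` is `D q (1 - q u)`, and `D` cancels.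
-/

local notation "q" => (RatFunc.X : RatFunc ℚ)

open PowerSeries

theorem PowerSeries.mk_pow_mul_one_sub_C_mul_X {R : Type*} [CommRing R] (a : R) :
    mk (a ^ ·) * (1 - C a * X) = 1 := by
  simpa [rescale_mk, rescale_X] using congrArg (rescale a) (mk_one_mul_one_sub_eq_one R)

theorem PowerSeries.mk_mul_pow_add_mul_pow_mul {R : Type*} [CommRing R] (α β a c : R) :
    mk (fun n => α * a ^ n + β * c ^ n) * ((1 - C a * X) * (1 - C c * X))
      = C (α + β) - C (α * c + β * a) * X := by
  have hsplit : mk (fun n => α * a ^ n + β * c ^ n) = C α * mk (a ^ ·) + C β * mk (c ^ ·) := by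
    ext n; simp
  rw [hsplit, map_add, map_add, map_mul, map_mul]
  linear_combination (C α * (1 - C c * X)) * mk_pow_mul_one_sub_C_mul_X a
    + (C β * (1 - C a * X)) * mk_pow_mul_one_sub_C_mul_X c

theorem RatFunc.one_sub_X_add_X_sq_ne_zero (K : Type*) [Field K] :
    (1 - RatFunc.X + RatFunc.X ^ 2 : RatFunc K) ≠ 0 := by
  have h : (1 - RatFunc.X + RatFunc.X ^ 2 : RatFunc K)
      = algebraMap (Polynomial K) _ (1 - Polynomial.X + Polynomial.X ^ 2) := by
    simp [← RatFunc.algebraMap_X]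
  rw [h]
  refine RatFunc.algebraMap_ne_zero fun h0 => ?_
  simpa using congrArg (Polynomial.coeff · 0) h0

section OddSeries

variable {K : Type*} [Field K] {t : K} (b : ℤ → K)
  (hbo : ∀ i : ℤ, b (2 * i + 1) = (1 - t + t ^ 2)⁻¹ * ((-t) ^ (-i) + t ^ (2 * i + 1) * (t - 1)))
include hbo

theorem odd_mul_pow_eq_partial_fractions (ht : t ≠ 0) (n : ℕ) :
    b (2 * ((n + 1 : ℕ) : ℤ) - 1) * t ^ (n + 1)
      = t / (1 - t + t ^ 2) * (-1) ^ n + (t - 1) * t ^ 2 / (1 - t + t ^ 2) * (t ^ 3) ^ n := by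
  rw [show 2 * ((n + 1 : ℕ) : ℤ) - 1 = 2 * n + 1 by push_cast; ring, hbo, zpow_neg, zpow_natCast,
    show 2 * (n : ℤ) + 1 = ((2 * n + 1 : ℕ) : ℤ) by push_cast; ring, zpow_natCast,
    neg_pow, mul_inv, ← inv_pow, inv_neg_one]
  field_simp
  ring

theorem mk_odd_mul_pow_eq_rational (ht : t ≠ 0) (hD : 1 - t + t ^ 2 ≠ 0) :
    (mk fun i : ℕ => if i = 0 then 0 else b (2 * (i : ℤ) - 1) * t ^ i)
      = C t * X * (1 - C t * X) * ((1 + X) * (1 - C (t ^ 3) * X))⁻¹ := by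
  set α := t / (1 - t + t ^ 2)
  set β := (t - 1) * t ^ 2 / (1 - t + t ^ 2)
  have hshift : (mk fun i : ℕ => if i = 0 then 0 else b (2 * (i : ℤ) - 1) * t ^ i)
      = X * mk fun n => α * (-1) ^ n + β * (t ^ 3) ^ n := by
    ext (_ | n)
    · simp
    · rw [coeff_succ_X_mul, coeff_mk, coeff_mk, if_neg n.succ_ne_zero,
        odd_mul_pow_eq_partial_fractions b hbo ht]
  have hα_add_β : α + β = t := by simp only [α, β]; field_simp; ring
  have hmixed : α * t ^ 3 + β * -1 = t * t := by simp only [α, β]; field_simp; ring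
  rw [eq_mul_inv_iff_mul_eq (by simp), hshift, mul_assoc,
    show (1 + X : K⟦X⟧) = 1 - C (-1) * X by simp [sub_eq_add_neg], mk_mul_pow_add_mul_pow_mul,
    hα_add_β, hmixed, map_mul]
  ring

end OddSeries

open PowerSeries in
theorem stmt12_general (b : ℤ → RatFunc ℚ)
    (hbo : ∀ i : ℤ, b (2 * i + 1) =
      (1 - q + q ^ 2)⁻¹ * ((-q) ^ (-i) + q ^ (2 * i + 1) * (q - 1))) :
    (PowerSeries.mk fun i : ℕ => if i = 0 then 0 else b (2 * (i : ℤ) - 1) * q ^ i)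
      = PowerSeries.C (R := RatFunc ℚ) q * PowerSeries.X
          * (1 - PowerSeries.C (R := RatFunc ℚ) q * PowerSeries.X)
          * ((1 + PowerSeries.X)
              * (1 - PowerSeries.C (R := RatFunc ℚ) (q ^ 3) * PowerSeries.X))⁻¹ :=
  mk_odd_mul_pow_eq_rational b hbo RatFunc.X_ne_zero (RatFunc.one_sub_X_add_X_sq_ne_zero ℚ)

open PowerSeries in
theorem stmt12 (b : ℤ → RatFunc ℚ)
    (hbe : ∀ i : ℤ, b (2 * i) =
      (1 - q + q ^ 2)⁻¹ * (1 - q) * ((-q) ^ (-i) - q ^ (2 * i) * (q + q⁻¹)))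
    (hbo : ∀ i : ℤ, b (2 * i + 1) =
      (1 - q + q ^ 2)⁻¹ * ((-q) ^ (-i) + q ^ (2 * i + 1) * (q - 1))) :
    (PowerSeries.mk fun i : ℕ => if i = 0 then 0 else b (2 * (i : ℤ) - 1) * q ^ i)
      = PowerSeries.C (R := RatFunc ℚ) q * PowerSeries.X
          * (1 - PowerSeries.C (R := RatFunc ℚ) q * PowerSeries.X)
          * ((1 + PowerSeries.X)
              * (1 - PowerSeries.C (R := RatFunc ℚ) (q ^ 3) * PowerSeries.X))⁻¹ :=
  stmt12_general b hbo
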